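/- arXiv:1310.4448 — 5 statements merged into one kernel-verified Lean document; each statement's English description precedes it below -/
import Mathlib

section
/- Let p be a prime. The number of points of the Fermat hypersurface x_0^{p+1} + x_1^{p+1} + x_2^{p+1} + x_3^{p+1} = 0 in the projective space P^3 over the field F_{p^2} equals (p^3+1)(p^2+1). -/
/-!
Write `q² = #K`. The map `x ↦ x ^ (q + 1)` sends `K` into the fixed points of `x ↦ x ^ q`, of
which there are at most `q`; its fibres have at most `q + 1` points, the fibre over `0` is `{0}`,
and the fibres cover all `q²` elements, so every nonzero fixed point has a fibre of exactly
`q + 1` points. As `x ↦ x ^ q` is additive, sums of `(q + 1)`-st powers are again fixed points,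
so adding a coordinate to the affine cone `∑ vᵢ ^ (q + 1) = 0` in `Kⁿ` gives the recursion
`Aₙ₊₁ = Aₙ + (q + 1) (q²ⁿ - Aₙ)`, whence `A₄ = q⁷ + q⁴ - q³`. The punctured cone is a
`Kˣ`-torsor over the projective hypersurface, which therefore has
`(A₄ - 1) / (q² - 1) = (q³ + 1) (q² + 1)` points.
-/

open Finset Polynomial
open scoped LinearAlgebra.Projectivization

section RootCount

variable {K : Type*} [Field K] [Fintype K] [DecidableEq K]

theorem card_filter_pow_eq_le {n : ℕ} (hn : 0 < n) (a : K) : #{x : K | x ^ n = a} ≤ n := by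
  refine card_le_degree_of_subset_roots (p := X ^ n - C a) (fun x hx => ?_) |>.trans ?_
  · rw [mem_roots (X_pow_sub_C_ne_zero hn a)]
    simpa [sub_eq_zero] using hx
  · rw [natDegree_X_pow_sub_C]

theorem card_filter_pow_eq_self_le {q : ℕ} (hq : 1 < q) : #{x : K | x ^ q = x} ≤ q := by
  refine card_le_degree_of_subset_roots (p := X ^ q - X) (fun x hx => ?_) |>.trans ?_
  · rw [mem_roots (FiniteField.X_pow_card_sub_X_ne_zero K hq)]
    simpa [sub_eq_zero] using hx
  · rw [FiniteField.X_pow_card_sub_X_natDegree_eq K hq]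

end RootCount

section CardEqSq

variable {K : Type*} [Field K] [Fintype K] {q : ℕ}

theorem one_lt_of_card_eq_sq (hK : Fintype.card K = q ^ 2) : 1 < q := by
  have h := Fintype.one_lt_card (α := K)
  rw [hK] at h
  by_contra! hq
  interval_cases q <;> simp at h

theorem exists_eq_ringChar_pow_of_card_eq_sq (hK : Fintype.card K = q ^ 2) :
    ∃ k, q = ringChar K ^ k := by
  obtain ⟨n, hp, hn⟩ := FiniteField.card K (ringChar K)
  obtain ⟨k, -, hk⟩ := (Nat.dvd_prime_pow hp).mp (Dvd.intro q (by rw [← sq, ← hK, hn]))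
  exact ⟨k, hk⟩

theorem exists_ringHom_eq_pow_of_card_eq_sq (hK : Fintype.card K = q ^ 2) :
    ∃ φ : K →+* K, ∀ x, φ x = x ^ q := by
  obtain ⟨k, rfl⟩ := exists_eq_ringChar_pow_of_card_eq_sq hK
  have : Fact (ringChar K).Prime := ⟨CharP.char_is_prime K _⟩
  exact ⟨iterateFrobenius K (ringChar K) k, fun _ => rfl⟩

theorem pow_succ_pow_eq_self_of_card_eq_sq (hK : Fintype.card K = q ^ 2) (x : K) :
    (x ^ (q + 1)) ^ q = x ^ (q + 1) := by
  have hx : x ^ q ^ 2 = x := hK ▸ FiniteField.pow_card x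
  calc (x ^ (q + 1)) ^ q = x ^ q ^ 2 * x ^ q := by ring
    _ = x ^ (q + 1) := by rw [hx, pow_succ']

variable [DecidableEq K]

theorem card_filter_pow_succ_eq_of_card_eq_sq (hK : Fintype.card K = q ^ 2) {c : K}
    (hc : c ^ q = c) (hc0 : c ≠ 0) : #{x : K | x ^ (q + 1) = c} = q + 1 := by
  set F : Finset K := {b : K | b ^ q = b}
  have hq := one_lt_of_card_eq_sq hK
  have h0F : (0 : K) ∈ F := by simp [F, zero_pow (by omega : q ≠ 0)]
  have hcF : c ∈ F.erase 0 := by simp [F, hc, hc0]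
  have hfibres : ∑ b ∈ F, #{x : K | x ^ (q + 1) = b} = q ^ 2 := by
    rw [← hK, ← card_univ, card_eq_sum_card_fiberwise (t := F)]
    intro x _
    simp [F, pow_succ_pow_eq_self_of_card_eq_sq hK]
  have hzero : #{x : K | x ^ (q + 1) = 0} = 1 := by
    simp [pow_eq_zero_iff, filter_eq']
  rw [← add_sum_erase F _ h0F, hzero] at hfibres
  by_contra hne
  have hlt : ∑ b ∈ F.erase 0, #{x : K | x ^ (q + 1) = b} < #(F.erase 0) * (q + 1) := by
    rw [← smul_eq_mul, ← sum_const]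
    exact sum_lt_sum (fun b _ => card_filter_pow_eq_le q.succ_pos b)
      ⟨c, hcF, (card_filter_pow_eq_le q.succ_pos c).lt_of_ne hne⟩
  have hF : #(F.erase 0) + 1 ≤ q := card_erase_add_one h0F ▸ card_filter_pow_eq_self_le hq
  nlinarith

end CardEqSq

def fermatCone (K : Type*) [CommSemiring K] [Fintype K] [DecidableEq K] (n d : ℕ) :
    Finset (Fin n → K) :=
  {v | ∑ i, v i ^ d = 0}

section FermatCone

variable {K : Type*} [Field K] [Fintype K] [DecidableEq K] {q : ℕ}

theorem card_fermatCone_succ_add (hK : Fintype.card K = q ^ 2) (n : ℕ) :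
    #(fermatCone K (n + 1) (q + 1)) + q * #(fermatCone K n (q + 1)) =
      (q + 1) * q ^ (2 * n) := by
  obtain ⟨φ, hφ⟩ := exists_ringHom_eq_pow_of_card_eq_sq hK
  set s : (Fin n → K) → K := fun v => ∑ i, v i ^ (q + 1)
  have hfibre (v : Fin n → K) :
      #{x : K | x ^ (q + 1) + s v = 0} = if s v = 0 then 1 else q + 1 := by
    split_ifs with h
    · simp [h, pow_eq_zero_iff, filter_eq']
    · have hfix : (-s v) ^ q = -s v := by
        rw [← hφ, map_neg, map_sum]
        simp only [s, hφ, pow_succ_pow_eq_self_of_card_eq_sq hK]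
      simp_rw [add_eq_zero_iff_eq_neg]
      exact card_filter_pow_succ_eq_of_card_eq_sq hK hfix (neg_ne_zero.mpr h)
  have hcons : #(fermatCone K (n + 1) (q + 1)) =
      ∑ v : Fin n → K, #{x : K | x ^ (q + 1) + s v = 0} := by
    simp only [fermatCone, card_filter]
    rw [← (Fin.consEquiv fun _ => K).sum_comp, Fintype.sum_prod_type, sum_comm]
    simp [s, Fin.sum_univ_succ, Fin.consEquiv]
  have hcompl := card_filter_add_card_filter_not (s := (univ : Finset (Fin n → K))) (s · = 0)
  rw [card_univ, Fintype.card_fun, Fintype.card_fin, hK, ← pow_mul] at hcompl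
  rw [hcons, sum_congr rfl fun v _ => hfibre v, sum_ite, sum_const, sum_const, ← hcompl]
  simp only [fermatCone, smul_eq_mul]
  ring

theorem card_fermatCone_succ (hK : Fintype.card K = q ^ 2) (n : ℕ) :
    (#(fermatCone K (n + 1) (q + 1)) : ℤ) =
      q ^ (2 * n + 1) - (-1) ^ n * (q ^ (n + 1) - q ^ n) := by
  induction n with
  | zero =>
    have h := card_fermatCone_succ_add hK 0
    simp [fermatCone] at h ⊢
    omega
  | succ n ih =>
    have h := card_fermatCone_succ_add hK (n + 1)
    zify at h
    linear_combination h - (q : ℤ) * ih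

end FermatCone

theorem sum_units_smul_pow_eq_zero_iff {K ι : Type*} [Field K] [Fintype ι] {d : ℕ} (c : Kˣ)
    (v : ι → K) : ∑ i, (c • v) i ^ d = 0 ↔ ∑ i, v i ^ d = 0 := by
  simp [Units.smul_def, mul_pow, ← mul_sum, c.ne_zero]

theorem natCard_ne_zero_and_sum_pow_eq_zero_add_one {K : Type*} [Field K] [Fintype K]
    [DecidableEq K] {n d : ℕ} (hd : d ≠ 0) :
    Nat.card {v : Fin n → K // v ≠ 0 ∧ ∑ i, v i ^ d = 0} + 1 = #(fermatCone K n d) := by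
  have h0 : (0 : Fin n → K) ∈ fermatCone K n d := by simp [fermatCone, zero_pow hd]
  rw [Nat.card_eq_fintype_card, Fintype.card_subtype, ← card_erase_add_one h0]
  congr 2
  ext v
  simp [fermatCone]

theorem Projectivization.card_setOf_rep_mul_card_units {k V : Type*} [DivisionRing k]
    [AddCommGroup V] [Module k V] {P : V → Prop} (hP : ∀ (c : kˣ) (v : V), P (c • v) ↔ P v) :
    Nat.card {x : ℙ k V | P x.rep} * Nat.card kˣ = Nat.card {v : V // v ≠ 0 ∧ P v} := by
  let e := nonZeroEquivProjectivizationProdUnits k V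
  have he (v : {v : V // v ≠ 0}) : P v ↔ P (e v).1.rep := by
    obtain ⟨c, hc⟩ := exists_smul_eq_mk_rep k v.1 v.2
    change P v ↔ P (mk k v.1 v.2).rep
    rw [← hc, hP]
  calc Nat.card {x : ℙ k V | P x.rep} * Nat.card kˣ
      = Nat.card {y : ℙ k V × kˣ // P y.1.rep} :=
        (Nat.card_prod _ _).symm.trans (Nat.card_congr Equiv.prodSubtypeFstEquivSubtypeProd.symm)
    _ = Nat.card {v : {v : V // v ≠ 0} // P v} := Nat.card_congr (e.subtypeEquiv he).symm
    _ = Nat.card {v : V // v ≠ 0 ∧ P v} :=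
        Nat.card_congr (Equiv.subtypeSubtypeEquivSubtypeInter _ _)

/-- The Fermat hypersurface `x₀^(p+1) + x₁^(p+1) + x₂^(p+1) + x₃^(p+1) = 0` in `ℙ³`
over `𝔽_{p²}` has exactly `(p³+1)(p²+1)` points. -/
theorem stmt2 (p : ℕ) [Fact p.Prime] :
    {x : ℙ (GaloisField p 2) (Fin 4 → GaloisField p 2) |
        ∑ i, (x.rep i) ^ (p + 1) = 0}.ncard = (p ^ 3 + 1) * (p ^ 2 + 1) := by
  classical
  let := Fintype.ofFinite (GaloisField p 2)
  have hK : Fintype.card (GaloisField p 2) = p ^ 2 := by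
    rw [← Nat.card_eq_fintype_card, GaloisField.card p 2 two_ne_zero]
  have hproj := Projectivization.card_setOf_rep_mul_card_units (k := GaloisField p 2)
    (P := fun v : Fin 4 → GaloisField p 2 => ∑ i, v i ^ (p + 1) = 0)
    sum_units_smul_pow_eq_zero_iff
  have hcone := natCard_ne_zero_and_sum_pow_eq_zero_add_one (K := GaloisField p 2) (n := 4)
    (d := p + 1) p.succ_ne_zero
  have hcount := card_fermatCone_succ hK 3
  rw [Nat.card_units, Nat.card_eq_fintype_card (α := GaloisField p 2), hK] at hproj
  rw [← hproj] at hcone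
  rw [← Nat.card_coe_set_eq]
  have hp2 : 1 < p ^ 2 := Nat.one_lt_pow two_ne_zero (Fact.out : p.Prime).one_lt
  refine Nat.eq_of_mul_eq_mul_right (m := p ^ 2 - 1) (Nat.sub_pos_of_lt hp2) ?_
  zify [hp2.le] at hcone ⊢
  linear_combination hcone + hcount
end

section
/- Let p be a prime and let V = F_{p^2}^4 be equipped with the standard nondegenerate Hermitian form ⟨x, y⟩ = Σ_i x_i y_i^p relative to the quadratic extension F_{p^2}/F_p. Then the number of isotropic lines in V, i.e., 1-dimensional F_{p^2}-subspaces U with U ⊆ U^⊥, equals (p^3+1)(p^2+1). -/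
/-!
For a quadratic extension `L/K` of finite fields with `q = #K`, the norm is `N x = x * x ^ q`, so
`v : Fin n → L` is isotropic iff `∑ i, N (v i) = 0`. Let `A n c` count the `v` with
`∑ i, N (v i) = c`. Scaling `v` by `a ≠ 0` multiplies this sum by `N a`, and `N` is onto `K`, so
`A n c` does not depend on `c ≠ 0`. Together with `∑ c, A n c = q ^ (2 * n)` and
`A (n + 1) 0 = ∑ x, A n (-N x)` this gives `A (n + 1) 0 + q * A n 0 = (q + 1) * q ^ (2 * n)`, hence
`A 4 0 = q ^ 7 + q ^ 4 - q ^ 3`. Every isotropic line holds `q ^ 2 - 1` nonzero isotropic vectors,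
so there are `(q ^ 7 + q ^ 4 - q ^ 3 - 1) / (q ^ 2 - 1) = (q ^ 3 + 1) * (q ^ 2 + 1)` of them.
-/

open Finset Submodule

section NormSum

variable (K L : Type*) [Field K] [Field L] [Fintype L] [DecidableEq K] [Algebra K L]

noncomputable def normSumCount (n : ℕ) (c : K) : ℕ :=
  #{v : Fin n → L | ∑ i, Algebra.norm K (v i) = c}

theorem normSumCount_zero_zero : normSumCount K L 0 0 = 1 := by
  simp [normSumCount]

theorem normSumCount_succ (n : ℕ) (c : K) :
    normSumCount K L (n + 1) c = ∑ x : L, normSumCount K L n (c - Algebra.norm K x) := by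
  simp only [normSumCount, card_filter]
  rw [← (Fin.consEquiv fun _ => L).sum_comp, Fintype.sum_prod_type]
  refine sum_congr rfl fun x _ => sum_congr rfl fun w _ => ?_
  simp [Fin.sum_univ_succ, eq_sub_iff_add_eq']

theorem ncard_ne_zero_add_one_eq_normSumCount_zero (n : ℕ) :
    {v : Fin n → L | v ≠ 0 ∧ ∑ i, Algebra.norm K (v i) = 0}.ncard + 1 = normSumCount K L n 0 := by
  have h0 : (0 : Fin n → L) ∈ {v | ∑ i, Algebra.norm K (v i) = 0} := by simp
  rw [normSumCount, ← Set.ncard_coe_finset, coe_filter_univ,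
    ← Set.ncard_sdiff_singleton_add_one h0 (Set.toFinite _)]
  congr 2
  ext v
  simp [and_comm]

variable {K L} in
theorem normSumCount_norm_mul {a : L} (ha : a ≠ 0) (n : ℕ) (c : K) :
    normSumCount K L n (Algebra.norm K a * c) = normSumCount K L n c := by
  have hN : Algebra.norm K a ≠ 0 := Algebra.norm_ne_zero_iff.2 ha
  refine (card_equiv (MulAction.toPerm (Units.mk0 a ha)) fun v => ?_).symm
  simp [Units.smul_mk0, map_mul, ← mul_sum, hN]

theorem normSumCount_of_ne_zero (n : ℕ) {c : K} (hc : c ≠ 0) :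
    normSumCount K L n c = normSumCount K L n 1 := by
  obtain ⟨a, rfl⟩ := FiniteField.norm_surjective K L c
  have ha : a ≠ 0 := by rintro rfl; simp at hc
  rw [← normSumCount_norm_mul ha n 1, mul_one]

theorem normSumCount_succ_zero (n : ℕ) :
    normSumCount K L (n + 1) 0 =
      normSumCount K L n 0 + (Fintype.card L - 1) * normSumCount K L n 1 := by
  classical
  rw [normSumCount_succ, ← add_sum_erase _ _ (mem_univ 0), Algebra.norm_zero, sub_zero,
    sum_congr rfl fun x hx => normSumCount_of_ne_zero K L n ?_, sum_const,
    card_erase_of_mem (mem_univ 0), card_univ, smul_eq_mul]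
  rw [zero_sub, neg_ne_zero]
  exact Algebra.norm_ne_zero_iff.2 (ne_of_mem_erase hx)

variable [Fintype K]

theorem sum_normSumCount (n : ℕ) : ∑ c, normSumCount K L n c = Fintype.card L ^ n :=
  calc ∑ c, normSumCount K L n c = #(univ : Finset (Fin n → L)) :=
        (card_eq_sum_card_fiberwise fun _ _ => mem_univ _).symm
    _ = Fintype.card L ^ n := by simp

theorem normSumCount_zero_add_mul (n : ℕ) :
    normSumCount K L n 0 + (Fintype.card K - 1) * normSumCount K L n 1 = Fintype.card L ^ n := by
  rw [← sum_normSumCount K L, ← add_sum_erase _ _ (mem_univ 0),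
    sum_congr rfl fun c hc => normSumCount_of_ne_zero K L n (ne_of_mem_erase hc), sum_const,
    card_erase_of_mem (mem_univ 0), card_univ, smul_eq_mul]

variable {K L}

theorem normSumCount_succ_zero_add_mul (hL : Fintype.card L = Fintype.card K ^ 2) (n : ℕ) :
    normSumCount K L (n + 1) 0 + Fintype.card K * normSumCount K L n 0 =
      (Fintype.card K + 1) * Fintype.card L ^ n := by
  obtain ⟨m, hm⟩ : ∃ m, Fintype.card K = m + 1 :=
    ⟨_, (Nat.succ_pred_eq_of_pos Fintype.card_pos).symm⟩
  have hL1 : Fintype.card L - 1 = (m + 2) * m := by rw [hL, hm]; ring_nf; omega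
  rw [normSumCount_succ_zero, hL1, ← normSumCount_zero_add_mul K L, hm, Nat.add_sub_cancel]
  ring

theorem normSumCount_four_zero_add (hL : Fintype.card L = Fintype.card K ^ 2) :
    normSumCount K L 4 0 + Fintype.card K ^ 3 = Fintype.card K ^ 7 + Fintype.card K ^ 4 := by
  have h := normSumCount_succ_zero_add_mul hL
  rw [hL] at h
  have h0 := normSumCount_zero_zero K L
  set q := Fintype.card K
  zify at h h0 ⊢
  linear_combination h 3 - (q : ℤ) * h 2 + (q : ℤ) ^ 2 * h 1 - (q : ℤ) ^ 3 * h 0 + (q : ℤ) ^ 4 * h0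

end NormSum

theorem algebraMap_norm_eq_mul_pow_card {K L : Type*} [Field K] [Field L] [Algebra K L]
    [Finite K] [Finite L] (hL : Nat.card L = Nat.card K ^ 2) (x : L) :
    algebraMap K L (Algebra.norm K x) = x * x ^ Nat.card K := by
  obtain ⟨m, hm⟩ : ∃ m, Nat.card K = m + 2 := ⟨_, (Nat.sub_add_cancel Finite.one_lt_card).symm⟩
  have hdiv : (Nat.card K ^ 2 - 1) / (Nat.card K - 1) = Nat.card K + 1 := by
    rw [hm, show (m + 2) ^ 2 - 1 = (m + 3) * (m + 1) by ring_nf; omega]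
    simp
  rw [FiniteField.algebraMap_norm_eq_pow, hL, hdiv, ← pow_succ']

theorem span_singleton_eq_of_finrank_eq_one {F V : Type*} [Field F] [AddCommGroup V] [Module F V]
    {U : Submodule F V} (hU : Module.finrank F U = 1) {v : V} (hvU : v ∈ U) (hv : v ≠ 0) :
    F ∙ v = U :=
  have : FiniteDimensional F U := Module.finite_of_finrank_eq_succ hU
  eq_of_le_of_finrank_le ((span_singleton_le_iff_mem v U).2 hvU)
    (by rw [hU, finrank_span_singleton hv])

theorem ncard_lines_mul_card_sub_one {F V : Type*} [Field F] [Fintype F] [AddCommGroup V]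
    [Module F V] [Finite V] {Q : Submodule F V → Prop} {P : V → Prop}
    (hQ : ∀ v, v ≠ 0 → (Q (F ∙ v) ↔ P v)) :
    {U : Submodule F V | Module.finrank F U = 1 ∧ Q U}.ncard * (Fintype.card F - 1) =
      {v : V | v ≠ 0 ∧ P v}.ncard := by
  classical
  have := Fintype.ofFinite V
  set S := {U : Submodule F V | Module.finrank F U = 1 ∧ Q U}
  set W : Finset V := {v | v ≠ 0 ∧ P v}
  have hmaps : ∀ v ∈ W, F ∙ v ∈ S.toFinset := fun v hv =>
    have hv := (mem_filter.1 hv).2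
    Set.mem_toFinset.2 ⟨finrank_span_singleton hv.1, (hQ v hv.1).2 hv.2⟩
  have hfiber : ∀ U ∈ S.toFinset, #{v ∈ W | F ∙ v = U} = Fintype.card F - 1 := by
    intro U hU
    rw [Set.mem_toFinset] at hU
    have : {v ∈ W | F ∙ v = U} = ({v | v ∈ U} : Finset V).erase 0 := by
      ext v
      simp only [W, mem_filter, mem_erase, mem_univ, true_and]
      constructor
      · rintro ⟨⟨hv, -⟩, rfl⟩
        exact ⟨hv, mem_span_singleton_self v⟩
      · rintro ⟨hv, hvU⟩
        have hspan := span_singleton_eq_of_finrank_eq_one hU.1 hvU hv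
        exact ⟨⟨hv, (hQ v hv).1 (hspan ▸ hU.2)⟩, hspan⟩
    rw [this, card_erase_of_mem (by simp), ← Fintype.card_subtype,
      Module.card_eq_pow_finrank (K := F), hU.1, pow_one]
  rw [Set.ncard_eq_toFinset_card' S, ← coe_filter_univ, Set.ncard_coe_finset,
    card_eq_sum_card_fiberwise hmaps, sum_congr rfl hfiber, sum_const, smul_eq_mul]

theorem isotropic_span_singleton_iff {R ι : Type*} [CommSemiring R] [Fintype ι] (p : ℕ)
    (v : ι → R) :
    (∀ x ∈ R ∙ v, ∀ y ∈ R ∙ v, ∑ i, x i * y i ^ p = 0) ↔ ∑ i, v i * v i ^ p = 0 := by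
  refine ⟨fun h => h v (mem_span_singleton_self v) v (mem_span_singleton_self v), ?_⟩
  intro h x hx y hy
  obtain ⟨a, rfl⟩ := mem_span_singleton.1 hx
  obtain ⟨b, rfl⟩ := mem_span_singleton.1 hy
  calc ∑ i, (a • v) i * (b • v) i ^ p = a * b ^ p * ∑ i, v i * v i ^ p := by
        simp only [Pi.smul_apply, smul_eq_mul, mul_pow, mul_sum]
        exact sum_congr rfl fun i _ => by ring
    _ = 0 := by rw [h, mul_zero]

theorem ncard_isotropic_lines_four {K L : Type*} [Field K] [Field L] [Fintype K] [Fintype L]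
    [Algebra K L] (hL : Fintype.card L = Fintype.card K ^ 2) :
    {U : Submodule L (Fin 4 → L) | Module.finrank L U = 1 ∧
        ∀ x ∈ U, ∀ y ∈ U, ∑ i, x i * y i ^ Fintype.card K = 0}.ncard =
      (Fintype.card K ^ 3 + 1) * (Fintype.card K ^ 2 + 1) := by
  classical
  have hnorm (v : Fin 4 → L) :
      ∑ i, v i * v i ^ Fintype.card K = 0 ↔ ∑ i, Algebra.norm K (v i) = 0 := by
    simp only [← FaithfulSMul.algebraMap_eq_zero_iff K L, map_sum,
      algebraMap_norm_eq_mul_pow_card (K := K) (L := L) (by simpa only [Nat.card_eq_fintype_card]),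
      Nat.card_eq_fintype_card]
  have hlines := ncard_lines_mul_card_sub_one
    (Q := fun U => ∀ x ∈ U, ∀ y ∈ U, ∑ i, x i * y i ^ Fintype.card K = 0)
    fun v _ => (isotropic_span_singleton_iff _ v).trans (hnorm v)
  have hvectors := ncard_ne_zero_add_one_eq_normSumCount_zero K L 4
  have hcount := normSumCount_four_zero_add hL
  rw [hL] at hlines
  set q := Fintype.card K
  have hq : 1 < q := Fintype.one_lt_card
  apply Nat.eq_of_mul_eq_mul_right (Nat.sub_pos_of_lt (Nat.one_lt_pow two_ne_zero hq))
  rw [hlines]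
  zify [Nat.one_le_pow 2 q (by omega)] at hvectors hcount ⊢
  linear_combination hvectors + hcount

/-- The number of isotropic lines in `𝔽_{p²}⁴` with the standard nondegenerate
Hermitian form `⟨x, y⟩ = ∑ i, x i * (y i)^p` is `(p³+1)(p²+1)`. -/
theorem stmt3 (p : ℕ) [Fact p.Prime] :
    {U : Submodule (GaloisField p 2) (Fin 4 → GaloisField p 2) |
        Module.finrank (GaloisField p 2) U = 1 ∧
        ∀ x ∈ U, ∀ y ∈ U, ∑ i, x i * (y i) ^ p = 0}.ncard
      = (p ^ 3 + 1) * (p ^ 2 + 1) := by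
  let _ : Fintype (GaloisField p 2) := Fintype.ofFinite _
  have hL : Fintype.card (GaloisField p 2) = Fintype.card (ZMod p) ^ 2 := by
    rw [← Nat.card_eq_fintype_card, GaloisField.card p 2 two_ne_zero, ZMod.card]
  simpa only [ZMod.card] using ncard_isotropic_lines_four hL
end

section
/- Let K be a field of characteristic not 2, V a nondegenerate quadratic space over K, and x ∈ V a nonzero isotropic vector. Then the kernel of left multiplication by x on the Clifford algebra C(V) equals its image, namely ker(L_x) = x·C(V), where L_x(a) = x·a. -/
/-- If `x` is a nonzero isotropic vector of a nondegenerate quadratic space `(V, Q)`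
over a field of characteristic not `2`, then the kernel of left multiplication by `x`
on the Clifford algebra `C(V)` equals its image `x·C(V)`. -/
theorem stmt10 {K V : Type*} [Field K] [AddCommGroup V] [Module K V]
    [FiniteDimensional K V] (hchar : (2 : K) ≠ 0)
    (Q : QuadraticForm K V)
    (hnd : ∀ v : V, (∀ w : V, QuadraticMap.polar Q v w = 0) → v = 0)
    (x : V) (hx : x ≠ 0) (hxiso : Q x = 0) :
    LinearMap.ker (LinearMap.mulLeft K (CliffordAlgebra.ι Q x))
      = LinearMap.range (LinearMap.mulLeft K (CliffordAlgebra.ι Q x)) := by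
  obtain ⟨y, hy⟩ : ∃ y, QuadraticMap.polar Q x y ≠ 0 := by
    by_contra h
    push_neg at h
    exact hx (hnd x h)
  set c := QuadraticMap.polar Q x y with hc
  apply le_antisymm
  · intro a ha
    simp only [LinearMap.mem_ker, LinearMap.mulLeft_apply] at ha
    refine ⟨c⁻¹ • (CliffordAlgebra.ι Q y * a), ?_⟩
    simp only [LinearMap.mulLeft_apply]
    have key : CliffordAlgebra.ι Q x * CliffordAlgebra.ι Q y
        + CliffordAlgebra.ι Q y * CliffordAlgebra.ι Q x
        = algebraMap K _ c := CliffordAlgebra.ι_mul_ι_add_swap x y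
    calc CliffordAlgebra.ι Q x * (c⁻¹ • (CliffordAlgebra.ι Q y * a))
        = c⁻¹ • ((CliffordAlgebra.ι Q x * CliffordAlgebra.ι Q y) * a) := by
          rw [mul_smul_comm, mul_assoc]
      _ = c⁻¹ • ((CliffordAlgebra.ι Q x * CliffordAlgebra.ι Q y
            + CliffordAlgebra.ι Q y * CliffordAlgebra.ι Q x) * a) := by
          rw [add_mul, mul_assoc, mul_assoc, ha, mul_zero, add_zero]
      _ = c⁻¹ • (algebraMap K _ c * a) := by rw [key]
      _ = a := by
          rw [Algebra.smul_def, ← mul_assoc, ← map_mul, inv_mul_cancel₀ hy, map_one, one_mul]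
  · rintro _ ⟨a, rfl⟩
    simp only [LinearMap.mem_ker, LinearMap.mulLeft_apply, ← mul_assoc,
      CliffordAlgebra.ι_sq_scalar, hxiso, map_zero, zero_mul]
end

section
/- Let R be a commutative ring, L a quadratic R-module, L_0 ⊆ L an R-submodule, and y ∈ L an element such that L = L_0 + R·y. Then inside the Clifford algebra C(L), one has C(L) = C(L_0) + y·C(L_0), where C(L_0) denotes the R-subalgebra of C(L) generated by L_0. -/
/-- Let `R` be a commutative ring, `L` a quadratic `R`-module, `L₀ ⊆ L` a submodule
and `y ∈ L` such that `L = L₀ + R·y`.  Then, inside the Clifford algebra `C(L)`,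
one has `C(L) = C(L₀) + y·C(L₀)`, where `C(L₀)` is the `R`-subalgebra of `C(L)`
generated by (the image of) `L₀`. -/
theorem stmt15 {R L : Type*} [CommRing R] [AddCommGroup L] [Module R L]
    (Q : QuadraticForm R L)
    (L₀ : Submodule R L) (y : L)
    (hgen : L₀ ⊔ Submodule.span R {y} = ⊤) :
    ∀ c : CliffordAlgebra Q,
      ∃ a b : CliffordAlgebra Q,
        a ∈ Algebra.adjoin R (CliffordAlgebra.ι Q '' (L₀ : Set L)) ∧
        b ∈ Algebra.adjoin R (CliffordAlgebra.ι Q '' (L₀ : Set L)) ∧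
        c = a + CliffordAlgebra.ι Q y * b := by
  set A := Algebra.adjoin R (CliffordAlgebra.ι Q '' (L₀ : Set L)) with hA
  set ι := CliffordAlgebra.ι Q with hι
  set P : CliffordAlgebra Q → Prop :=
    fun c => ∃ a b : CliffordAlgebra Q, a ∈ A ∧ b ∈ A ∧ c = a + ι y * b with hP
  have hmemA : ∀ x ∈ L₀, ι x ∈ A := by
    intro x hx
    exact Algebra.subset_adjoin ⟨x, hx, rfl⟩
  -- closure properties of P
  have hPadd : ∀ c c', P c → P c' → P (c + c') := by
    rintro c c' ⟨a, b, ha, hb, rfl⟩ ⟨a', b', ha', hb', rfl⟩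
    exact ⟨a + a', b + b', add_mem ha ha', add_mem hb hb', by noncomm_ring⟩
  have hPsmul : ∀ (r : R) c, P c → P (r • c) := by
    rintro r c ⟨a, b, ha, hb, rfl⟩
    refine ⟨r • a, r • b, Subalgebra.smul_mem _ ha r, Subalgebra.smul_mem _ hb r, ?_⟩
    rw [smul_add, mul_smul_comm]
  -- key step : multiplication by ι y preserves P
  have hPy : ∀ c, P c → P (ι y * c) := by
    rintro c ⟨a, b, ha, hb, rfl⟩
    refine ⟨(Q y) • b, a, Subalgebra.smul_mem _ hb _, ha, ?_⟩
    rw [mul_add, ← mul_assoc, hι, CliffordAlgebra.ι_sq_scalar, Algebra.smul_def]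
    abel
  -- multiplication by ι x₀, x₀ ∈ L₀, preserves P
  have hP0 : ∀ x₀ ∈ L₀, ∀ c, P c → P (ι x₀ * c) := by
    rintro x₀ hx₀ c ⟨a, b, ha, hb, rfl⟩
    refine ⟨ι x₀ * a + (QuadraticMap.polar Q x₀ y) • b, -(ι x₀ * b),
      add_mem (mul_mem (hmemA _ hx₀) ha) (Subalgebra.smul_mem _ hb _),
      neg_mem (mul_mem (hmemA _ hx₀) hb), ?_⟩
    have := CliffordAlgebra.ι_mul_ι_comm (Q := Q) x₀ y
    rw [mul_add, ← mul_assoc, hι, this, Algebra.smul_def]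
    noncomm_ring
  -- multiplication by ι x for general x preserves P
  have hPx : ∀ x : L, ∀ c, P c → P (ι x * c) := by
    intro x c hc
    have hx : x ∈ L₀ ⊔ Submodule.span R {y} := hgen ▸ Submodule.mem_top
    obtain ⟨x₀, hx₀, z, hz, rfl⟩ := Submodule.mem_sup.mp hx
    obtain ⟨r, rfl⟩ := Submodule.mem_span_singleton.mp hz
    rw [map_add, map_smul, add_mul, smul_mul_assoc]
    exact hPadd _ _ (hP0 _ hx₀ _ hc) (hPsmul r _ (hPy _ hc))
  -- main induction: every element acts on P-elements
  have main : ∀ c : CliffordAlgebra Q, ∀ m, P m → P (c * m) := by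
    intro c
    induction c using CliffordAlgebra.induction with
    | algebraMap r =>
        intro m hm
        rw [← Algebra.smul_def]
        exact hPsmul r m hm
    | ι x => exact fun m hm => hPx x m hm
    | mul u v hu hv =>
        intro m hm
        rw [mul_assoc]
        exact hu _ (hv _ hm)
    | add u v hu hv =>
        intro m hm
        rw [add_mul]
        exact hPadd _ _ (hu _ hm) (hv _ hm)
  intro c
  have h1 : P 1 := ⟨1, 0, one_mem _, zero_mem _, by simp⟩
  obtain ⟨a, b, ha, hb, h⟩ := main c 1 h1
  exact ⟨a, b, ha, hb, by simpa using h⟩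
end

section
/- Let p be a prime and n ≥ 1. Any two nondegenerate Hermitian spaces of dimension n over F_{p^2} (relative to the extension F_{p^2}/F_p) are isometric; in particular every nondegenerate Hermitian form on F_{p^2}^n is isometric to the standard form ⟨x,y⟩ = Σ_i x_i y_i^p. -/
/-!
A nondegenerate Hermitian form over `𝔽_{p²}` has an orthonormal basis, hence is isometric to
the standard form, and two such spaces of equal dimension are isometric through the standard one.

The basis is built one vector at a time. If `h x y ≠ 0`, rescaling `x` makes
`h (x + y) (x + y) = d + d ^ p` for any prescribed `d`, and the trace `d ↦ d + d ^ p` does not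
vanish identically because `X ^ p + X` has fewer than `p ^ 2` roots; so some `x` has
`h x x ≠ 0`. Since `h x x` lies in `𝔽_p` and the norm `d ↦ d ^ (p + 1)` of `𝔽_{p²}/𝔽_p` is
surjective, `x` rescales to a unit vector `e`, whose orthogonal complement is again
nondegenerate, of one dimension less.
-/

/-- A Hermitian form relative to `𝔽_{p²}/𝔽_p`: biadditive, linear in the first
variable and conjugate symmetric with respect to the Frobenius `x ↦ x^p`. -/
def IsHermitianForm (p : ℕ) [Fact p.Prime] {V : Type*} [AddCommGroup V]
    [Module (GaloisField p 2) V] (h : V → V → GaloisField p 2) : Prop :=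
  (∀ x x' y, h (x + x') y = h x y + h x' y) ∧
  (∀ (c : GaloisField p 2) (x y : V), h (c • x) y = c * h x y) ∧
  (∀ x y, h y x = (h x y) ^ p)

open Polynomial in
theorem FiniteField.exists_add_pow_ne_zero {K : Type*} [Field K] [Finite K] {p : ℕ} (hp : 1 < p)
    (hK : p < Nat.card K) : ∃ d : K, d + d ^ p ≠ 0 := by
  have := Fintype.ofFinite K
  by_contra! h
  have hdeg : (X ^ p + X : K[X]).natDegree = p := by
    rw [natDegree_add_eq_left_of_natDegree_lt] <;> simp [hp]
  have hne : (X ^ p + X : K[X]) ≠ 0 := ne_zero_of_natDegree_gt (hdeg ▸ hp)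
  have := card_le_degree_of_subset_roots (Z := Finset.univ) (p := X ^ p + X) fun d _ =>
    (mem_roots hne).mpr (by simpa [add_comm] using h d)
  rw [Finset.card_univ, hdeg, Fintype.card_eq_nat_card] at this
  omega

theorem GaloisField.exists_pow_succ_eq (p : ℕ) [Fact p.Prime] {c : GaloisField p 2}
    (hc : c ^ p = c) : ∃ d : GaloisField p 2, d ^ (p + 1) = c := by
  obtain ⟨n, rfl⟩ :=
    (mem_bot_iff_intCast p _).mp ((Subfield.mem_bot_iff_pow_eq_self _ p).mpr hc)
  obtain ⟨d, hd⟩ := FiniteField.norm_surjective (ZMod p) (GaloisField p 2) n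
  refine ⟨d, ?_⟩
  have := FiniteField.algebraMap_norm_eq_pow (K := ZMod p) (x := d)
  rw [hd, map_intCast, GaloisField.card p 2 two_ne_zero, Nat.card_zmod] at this
  rw [this]
  congr 1
  have hp := (Fact.out : p.Prime).one_lt
  refine (Nat.div_eq_of_eq_mul_left (by omega) ?_).symm
  zify [Nat.one_le_pow 2 p (by omega), hp.le]
  ring

namespace IsHermitianForm

variable {p : ℕ} [Fact p.Prime] {V W : Type*} [AddCommGroup V] [Module (GaloisField p 2) V]
  [AddCommGroup W] [Module (GaloisField p 2) W] {h : V → V → GaloisField p 2}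

protected lemma add_left (hh : IsHermitianForm p h) (x x' y : V) :
    h (x + x') y = h x y + h x' y :=
  hh.1 x x' y

protected lemma smul_left (hh : IsHermitianForm p h) (c : GaloisField p 2) (x y : V) :
    h (c • x) y = c * h x y :=
  hh.2.1 c x y

lemma conj_symm (hh : IsHermitianForm p h) (x y : V) : h y x = h x y ^ p :=
  hh.2.2 x y

lemma zero_left (hh : IsHermitianForm p h) (y : V) : h 0 y = 0 := by
  simpa using hh.smul_left 0 0 y

protected lemma add_right (hh : IsHermitianForm p h) (x y y' : V) :
    h x (y + y') = h x y + h x y' := by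
  rw [hh.conj_symm, hh.add_left, add_pow_char, ← hh.conj_symm, ← hh.conj_symm]

protected lemma smul_right (hh : IsHermitianForm p h) (c : GaloisField p 2) (x y : V) :
    h x (c • y) = c ^ p * h x y := by
  rw [hh.conj_symm, hh.smul_left, mul_pow, ← hh.conj_symm]

lemma add_add_self (hh : IsHermitianForm p h) (x y : V) :
    h (x + y) (x + y) = h x x + h x y + h x y ^ p + h y y := by
  rw [hh.add_left, hh.add_right, hh.add_right, ← hh.conj_symm]
  ring

noncomputable def toSesq (hh : IsHermitianForm p h) :
    V →ₗ[GaloisField p 2] V →ₛₗ[frobenius (GaloisField p 2) p] GaloisField p 2 :=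
  LinearMap.mk₂'ₛₗ _ _ h hh.add_left hh.smul_left hh.add_right hh.smul_right

@[simp]
lemma toSesq_apply (hh : IsHermitianForm p h) (x y : V) : hh.toSesq x y = h x y :=
  rfl

lemma comp_linearMap (hh : IsHermitianForm p h) (f : W →ₗ[GaloisField p 2] V) :
    IsHermitianForm p fun x y => h (f x) (f y) :=
  ⟨fun x x' y => by simp only [map_add, hh.add_left],
   fun c x y => by simp only [map_smul, hh.smul_left],
   fun x y => hh.conj_symm _ _⟩

lemma eq_sum_of_orthonormal (hh : IsHermitianForm p h) {ι : Type*} [Fintype ι] [DecidableEq ι]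
    (b : Module.Basis ι (GaloisField p 2) V) (hb : ∀ i j, h (b i) (b j) = if i = j then 1 else 0)
    (x y : V) : h x y = ∑ i, b.repr x i * b.repr y i ^ p := by
  conv_lhs => rw [← hh.toSesq_apply, ← b.sum_equivFun x, ← b.sum_equivFun y]
  simp only [map_sum, map_smulₛₗ, LinearMap.sum_apply, LinearMap.smul_apply, toSesq_apply, hb,
    smul_eq_mul, RingHom.id_apply, frobenius_def]
  simp [mul_comm]

lemma exists_apply_self_ne_zero [Nontrivial V] (hh : IsHermitianForm p h)
    (hnd : ∀ x, (∀ y, h x y = 0) → x = 0) : ∃ x, h x x ≠ 0 := by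
  by_contra! hzero
  obtain ⟨x, hx⟩ := exists_ne (0 : V)
  obtain ⟨y, hxy⟩ : ∃ y, h x y ≠ 0 := by
    by_contra! hx0
    exact hx (hnd x hx0)
  have hp := (Fact.out : p.Prime).one_lt
  obtain ⟨d, hd⟩ := FiniteField.exists_add_pow_ne_zero (K := GaloisField p 2) hp
    (by rw [GaloisField.card p 2 two_ne_zero]; exact lt_self_pow₀ hp one_lt_two)
  have := hh.add_add_self ((d / h x y) • x) y
  rw [hzero, hzero, hzero, hh.smul_left, div_mul_cancel₀ _ hxy, zero_add, add_zero] at this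
  exact hd this.symm

lemma exists_apply_self_eq_one [Nontrivial V] (hh : IsHermitianForm p h)
    (hnd : ∀ x, (∀ y, h x y = 0) → x = 0) : ∃ e, h e e = 1 := by
  obtain ⟨x, hx⟩ := hh.exists_apply_self_ne_zero hnd
  obtain ⟨d, hd⟩ := GaloisField.exists_pow_succ_eq p (c := (h x x)⁻¹)
    (by rw [inv_pow, ← hh.conj_symm])
  refine ⟨d • x, ?_⟩
  rw [hh.smul_left, hh.smul_right, ← mul_assoc, ← pow_succ', hd, inv_mul_cancel₀ hx]

noncomputable def orthogonal (hh : IsHermitianForm p h) (e : V) : Submodule (GaloisField p 2) V :=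
  LinearMap.ker (hh.toSesq.flip e)

lemma mem_orthogonal (hh : IsHermitianForm p h) {e x : V} : x ∈ hh.orthogonal e ↔ h x e = 0 :=
  Iff.rfl

lemma sub_smul_mem_orthogonal (hh : IsHermitianForm p h) {e : V} (he : h e e = 1) (x : V) :
    x - h x e • e ∈ hh.orthogonal e := by
  rw [mem_orthogonal, ← hh.toSesq_apply, LinearMap.map_sub₂, LinearMap.map_smul₂]
  simp [he]

lemma finrank_orthogonal_add_one [FiniteDimensional (GaloisField p 2) V]
    (hh : IsHermitianForm p h) {e : V} (he : h e e = 1) :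
    Module.finrank (GaloisField p 2) (hh.orthogonal e) + 1 =
      Module.finrank (GaloisField p 2) V := by
  have hsurj : LinearMap.range (hh.toSesq.flip e) = ⊤ :=
    LinearMap.range_eq_top.mpr fun c => ⟨c • e, by simp [he]⟩
  rw [← LinearMap.finrank_range_add_finrank_ker (hh.toSesq.flip e), hsurj, finrank_top,
    Module.finrank_self, add_comm]
  rfl

lemma nondegenerate_orthogonal (hh : IsHermitianForm p h) {e : V} (he : h e e = 1)
    (hnd : ∀ x, (∀ y, h x y = 0) → x = 0) (x : hh.orthogonal e)
    (hx : ∀ y : hh.orthogonal e, h x y = 0) : x = 0 := by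
  ext
  refine hnd x fun v => ?_
  calc h x v = h x (h v e • e) + h x (v - h v e • e) := by rw [← hh.add_right, add_sub_cancel]
    _ = 0 := by
      rw [hh.smul_right, hh.mem_orthogonal.mp x.2, hx ⟨_, hh.sub_smul_mem_orthogonal he v⟩,
        mul_zero, add_zero]

lemma exists_orthonormal_basis_of_orthogonal (hh : IsHermitianForm p h) {e : V} (he : h e e = 1)
    {n : ℕ} (b : Module.Basis (Fin n) (GaloisField p 2) (hh.orthogonal e))
    (hb : ∀ i j, h (b i) (b j) = if i = j then 1 else 0) :
    ∃ b' : Module.Basis (Fin (n + 1)) (GaloisField p 2) V,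
      ∀ i j, h (b' i) (b' j) = if i = j then 1 else 0 := by
  have hli (c : GaloisField p 2) (x) (hx : x ∈ hh.orthogonal e) (h0 : c • e + x = 0) :
      c = 0 := by
    simpa [hh.add_left, hh.smul_left, he, hh.mem_orthogonal.mp hx, hh.zero_left] using
      congrArg (h · e) h0
  refine ⟨.mkFinCons e b hli fun z => ⟨-h z e, ?_⟩, fun i j => ?_⟩
  · simpa [sub_eq_add_neg] using hh.sub_smul_mem_orthogonal he z
  have hbe (i) : h (b i) e = 0 := (b i).2
  have heb (i) : h e (b i) = 0 := by
    rw [hh.conj_symm, hbe, zero_pow (Fact.out : p.Prime).ne_zero]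
  rw [Module.Basis.coe_mkFinCons]
  cases i using Fin.cases <;> cases j using Fin.cases <;>
    simp [he, hb, hbe, heb, Fin.succ_ne_zero, (Fin.succ_ne_zero _).symm]

lemma exists_orthonormal_basis (hh : IsHermitianForm p h)
    (hnd : ∀ x, (∀ y, h x y = 0) → x = 0) {n : ℕ} [FiniteDimensional (GaloisField p 2) V]
    (hn : Module.finrank (GaloisField p 2) V = n) :
    ∃ b : Module.Basis (Fin n) (GaloisField p 2) V,
      ∀ i j, h (b i) (b j) = if i = j then 1 else 0 := by
  induction n generalizing V with
  | zero => exact ⟨Module.finBasisOfFinrankEq _ _ hn, finZeroElim⟩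
  | succ n ih =>
    have : Nontrivial V := Module.nontrivial_of_finrank_eq_succ hn
    obtain ⟨e, he⟩ := hh.exists_apply_self_eq_one hnd
    obtain ⟨b, hb⟩ := ih (hh.comp_linearMap (hh.orthogonal e).subtype)
      (hh.nondegenerate_orthogonal he hnd) (by have := hh.finrank_orthogonal_add_one he; omega)
    exact hh.exists_orthonormal_basis_of_orthogonal he b hb

theorem exists_linearEquiv_standard (hh : IsHermitianForm p h)
    (hnd : ∀ x, (∀ y, h x y = 0) → x = 0) {n : ℕ} [FiniteDimensional (GaloisField p 2) V]
    (hn : Module.finrank (GaloisField p 2) V = n) :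
    ∃ e : V ≃ₗ[GaloisField p 2] (Fin n → GaloisField p 2),
      ∀ x y, ∑ i, e x i * e y i ^ p = h x y := by
  obtain ⟨b, hb⟩ := hh.exists_orthonormal_basis hnd hn
  exact ⟨b.equivFun, fun x y => (hh.eq_sum_of_orthonormal b hb x y).symm⟩

end IsHermitianForm

/-- Any two nondegenerate Hermitian spaces of the same dimension `n` over `𝔽_{p²}`
(relative to `𝔽_{p²}/𝔽_p`) are isometric; in particular every nondegenerate Hermitian
form on `𝔽_{p²}ⁿ` is isometric to the standard form `⟨x,y⟩ = ∑ i, x i * (y i)^p`. -/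
theorem stmt17 (p n : ℕ) [Fact p.Prime]
    {V₁ V₂ : Type*} [AddCommGroup V₁] [Module (GaloisField p 2) V₁]
    [AddCommGroup V₂] [Module (GaloisField p 2) V₂]
    [FiniteDimensional (GaloisField p 2) V₁] [FiniteDimensional (GaloisField p 2) V₂]
    (hd₁ : Module.finrank (GaloisField p 2) V₁ = n)
    (hd₂ : Module.finrank (GaloisField p 2) V₂ = n)
    (h₁ : V₁ → V₁ → GaloisField p 2) (hherm₁ : IsHermitianForm p h₁)
    (hnd₁ : ∀ x : V₁, (∀ y : V₁, h₁ x y = 0) → x = 0)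
    (h₂ : V₂ → V₂ → GaloisField p 2) (hherm₂ : IsHermitianForm p h₂)
    (hnd₂ : ∀ x : V₂, (∀ y : V₂, h₂ x y = 0) → x = 0) :
    (∃ e : V₁ ≃ₗ[GaloisField p 2] V₂, ∀ x y, h₂ (e x) (e y) = h₁ x y) ∧
    (∀ h : (Fin n → GaloisField p 2) → (Fin n → GaloisField p 2) → GaloisField p 2,
        IsHermitianForm p h → (∀ x, (∀ y, h x y = 0) → x = 0) →
        ∃ e : (Fin n → GaloisField p 2) ≃ₗ[GaloisField p 2] (Fin n → GaloisField p 2),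
          ∀ x y, (∑ i, (e x) i * ((e y) i) ^ p) = h x y) := by
  obtain ⟨e₁, he₁⟩ := hherm₁.exists_linearEquiv_standard hnd₁ hd₁
  obtain ⟨e₂, he₂⟩ := hherm₂.exists_linearEquiv_standard hnd₂ hd₂
  refine ⟨⟨e₁.trans e₂.symm, fun x y => ?_⟩,
    fun h hh hnd => hh.exists_linearEquiv_standard hnd (Module.finrank_fin_fun _)⟩
  rw [← he₁, ← he₂]
  simp
end
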